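/- Let U be a strictly convex open set in a real normed space X and K a compact subset of the boundary S = ∂U of U in X. Then there exists a closed ℓ-neighborhood L of K in X such that L ∩ S = K. -/

import Mathlib

open Topology Filter Set TopologicalSpace

section Definitions

variable {X Y : Type*}

/-- A set `U` is functionally open if it is the preimage of an open set of `ℝ`
under a continuous real-valued function. -/
def FunctionallyOpen [TopologicalSpace Y] (U : Set Y) : Prop :=
  ∃ g : Y → ℝ, Continuous g ∧ ∃ V : Set ℝ, IsOpen V ∧ U = g ⁻¹' V

/-- A set is `Fσ` if it is a countable union of closed sets. -/
def IsFSigma [TopologicalSpace X] (s : Set X) : Prop :=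
  ∃ F : ℕ → Set X, (∀ n, IsClosed (F n)) ∧ s = ⋃ n, F n

/-- A function is `Fσ`-measurable if preimages of functionally open sets are `Fσ`. -/
def FSigmaMeasurable [TopologicalSpace X] [TopologicalSpace Y] (f : X → Y) : Prop :=
  ∀ U : Set Y, FunctionallyOpen U → IsFSigma (f ⁻¹' U)

/-- A set has the Baire property if its symmetric difference with some open set is meager. -/
def HasBaireProperty [TopologicalSpace X] (A : Set X) : Prop :=
  ∃ O : Set X, IsOpen O ∧ IsMeagre (symmDiff O A)

/-- A function is BP-measurable if preimages of functionally open sets have the Baire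
property. -/
def BPMeasurable [TopologicalSpace X] [TopologicalSpace Y] (f : X → Y) : Prop :=
  ∀ U : Set Y, FunctionallyOpen U → HasBaireProperty (f ⁻¹' U)

/-- A function on a topological vector space is linearly continuous if its restriction to
every affine line is continuous. -/
def LinearlyContinuous [AddCommGroup X] [Module ℝ X] [TopologicalSpace X] [TopologicalSpace Y]
    (f : X → Y) : Prop :=
  ∀ x v : X, Continuous fun t : ℝ => f (x + t • v)

/-- A function is quasi-continuous if for every point `x`, every neighborhood `V` of `x`
and every neighborhood `W` of `f x` there is a nonempty open `U ⊆ V` with `f '' U ⊆ W`. -/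
def QuasiContinuous [TopologicalSpace X] [TopologicalSpace Y] (f : X → Y) : Prop :=
  ∀ x : X, ∀ V ∈ 𝓝 x, ∀ W ∈ 𝓝 (f x),
    ∃ U : Set X, IsOpen U ∧ U.Nonempty ∧ U ⊆ V ∧ f '' U ⊆ W

/-- A set `U` is conical at `x` if it is nonempty and contains the open segment from `x`
to each of its points. -/
def ConicalAt [AddCommGroup X] [Module ℝ X] (x : X) (U : Set X) : Prop :=
  U.Nonempty ∧ ∀ u ∈ U, ∀ t : ℝ, 0 < t → t < 1 → (1 - t) • x + t • u ∈ U

/-- Conical quasi-continuity. -/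
def ConicallyQuasiContinuous [AddCommGroup X] [Module ℝ X] [TopologicalSpace X]
    [TopologicalSpace Y] (f : X → Y) : Prop :=
  ∀ x : X, ∀ V : Set X, IsOpen V → ConicalAt x V → ∀ W : Set Y, IsOpen W → f x ∈ W →
    ∃ U : Set X, IsOpen U ∧ ConicalAt x U ∧ U ⊆ V ∧ f '' U ⊆ W

/-- `L` is an ℓ-neighborhood of `A`. -/
def IsLNbhd [AddCommGroup X] [Module ℝ X] (L A : Set X) : Prop :=
  ∀ a ∈ A, ∀ v : X, ∃ ε > (0 : ℝ), ∀ t : ℝ, 0 ≤ t → t < ε → a + t • v ∈ L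

/-- A set `A` is ℓ-miserable if `A ⊆ closure (X \ L)` for some closed ℓ-neighborhood `L`
of `A`. -/
def LMiserable [AddCommGroup X] [Module ℝ X] [TopologicalSpace X] (A : Set X) : Prop :=
  ∃ L : Set X, IsClosed L ∧ IsLNbhd L A ∧ A ⊆ closure Lᶜ

/-- A set is σ̄-ℓ-miserable if it is a countable union of closed ℓ-miserable sets. -/
def SigmaLMiserable [AddCommGroup X] [Module ℝ X] [TopologicalSpace X] (A : Set X) : Prop :=
  ∃ F : ℕ → Set X, (∀ n, IsClosed (F n) ∧ LMiserable (F n)) ∧ A = ⋃ n, F n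

/-- A function is of the first Baire class if it is a pointwise limit of a sequence of
continuous functions. -/
def BaireClassOne [TopologicalSpace X] [TopologicalSpace Y] (f : X → Y) : Prop :=
  ∃ g : ℕ → X → Y, (∀ n, Continuous (g n)) ∧
    ∀ x, Tendsto (fun n => g n x) atTop (𝓝 (f x))

/-- A topological space is cosmic if it is a continuous image of a separable metrizable
space. -/
def CosmicSpace (X : Type*) [TopologicalSpace X] : Prop :=
  ∃ (M : Type) (_ : TopologicalSpace M), MetrizableSpace M ∧ SeparableSpace M ∧
    ∃ g : M → X, Continuous g ∧ Function.Surjective g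

/-- A set `C` is strictly convex if for any distinct points of its closure the open segment
between them lies in `C`. -/
def StrictlyConvexSet [AddCommGroup X] [Module ℝ X] [TopologicalSpace X] (C : Set X) : Prop :=
  ∀ x ∈ closure C, ∀ y ∈ closure C, x ≠ y →
    ∀ t : ℝ, 0 < t → t < 1 → (1 - t) • x + t • y ∈ C

/-- A function is σ̄-continuous if the space is a countable union of closed sets on each of
which the function is continuous. -/
def SigmaContinuous [TopologicalSpace X] [TopologicalSpace Y] (f : X → Y) : Prop :=
  ∃ F : ℕ → Set X, (∀ n, IsClosed (F n)) ∧ (⋃ n, F n) = Set.univ ∧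
    ∀ n, ContinuousOn f (F n)

end Definitions

/-!
The neighbourhood is the union of two closed sets. On the first, `d(y, K)² ≤ d(y, X \ U)`, so it
meets `∂U` only in `K`; it contains an initial piece of every ray from `a ∈ K` that enters `U`,
since by convexity `d(a + t v, X \ U)` grows linearly in `t` while `d(a + t v, K)² ≤ t² ‖v‖²`.
The second consists of the points `x` such that the segment `(a, x]` misses `U` for some `a ∈ K`;
it is closed because `K` is compact, it contains every ray from `K` that never enters `U`, and by
strict convexity it meets `∂U` only in `K`.
-/

open Metric

section ExteriorShadow

variable {X : Type*} [AddCommGroup X] [Module ℝ X]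

def exteriorShadow (K U : Set X) : Set X :=
  {x | ∃ a ∈ K, ∀ s ∈ Ioc (0 : ℝ) 1, (1 - s) • a + s • x ∉ U}

variable [TopologicalSpace X]

theorem StrictlyConvexSet.convex {U : Set X} (hU : StrictlyConvexSet U) : Convex ℝ U := by
  refine convex_iff_forall_pos.2 fun x hx y hy a b ha hb hab => ?_
  rcases eq_or_ne x y with rfl | hxy
  · rwa [← add_smul, hab, one_smul]
  · rw [eq_sub_of_add_eq hab]
    exact hU x (subset_closure hx) y (subset_closure hy) hxy b hb (by linarith)

theorem StrictlyConvexSet.exteriorShadow_inter_frontier_subset {K U : Set X}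
    (hU : StrictlyConvexSet U) (hK : K ⊆ closure U) : exteriorShadow K U ∩ frontier U ⊆ K := by
  rintro x ⟨⟨a, ha, hseg⟩, hx⟩
  by_contra hxK
  have hax : a ≠ x := fun h => hxK (h ▸ ha)
  exact hseg (1 / 2) ⟨by norm_num, by norm_num⟩
    (hU a (hK ha) x (frontier_subset_closure hx) hax _ (by norm_num) (by norm_num))

theorem isClosed_exteriorShadow [ContinuousAdd X] [ContinuousSMul ℝ X] {K U : Set X}
    (hK : IsCompact K) (hU : IsOpen U) : IsClosed (exteriorShadow K U) := by
  have : CompactSpace K := isCompact_iff_compactSpace.1 hK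
  have hclosed : IsClosed {p : K × X | ∀ s ∈ Ioc (0 : ℝ) 1, (1 - s) • (p.1 : X) + s • p.2 ∈ Uᶜ} := by
    simp only [ofPred_forall]
    exact isClosed_biInter fun s _ => hU.isClosed_compl.preimage (by fun_prop)
  convert isClosedMap_snd_of_compactSpace _ hclosed using 1
  ext x
  simp [exteriorShadow]

end ExteriorShadow

section ParabolicRegion

variable {X : Type*}

def parabolicRegion [PseudoMetricSpace X] (K U : Set X) : Set X :=
  {y | infDist y K ^ 2 ≤ infDist y Uᶜ}

theorem isClosed_parabolicRegion [PseudoMetricSpace X] (K U : Set X) :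
    IsClosed (parabolicRegion K U) :=
  isClosed_le ((continuous_infDist_pt K).pow 2) (continuous_infDist_pt _)

theorem subset_parabolicRegion [PseudoMetricSpace X] (K U : Set X) : K ⊆ parabolicRegion K U :=
  fun a ha => by simp [parabolicRegion, infDist_zero_of_mem ha, infDist_nonneg]

theorem parabolicRegion_inter_frontier_subset [PseudoMetricSpace X] {K U : Set X}
    (hK : IsClosed K) (hKne : K.Nonempty) : parabolicRegion K U ∩ frontier U ⊆ K := by
  rintro y ⟨hy, hyU⟩
  have hUc : infDist y Uᶜ = 0 :=
    infDist_zero_of_mem_closure (frontier_eq_closure_inter_closure.subset hyU).2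
  have hyK : infDist y K ^ 2 ≤ 0 := hUc ▸ hy
  exact (hK.mem_iff_infDist_zero hKne).2 (sq_eq_zero_iff.1 (le_antisymm hyK (sq_nonneg _)))

variable [NormedAddCommGroup X] [NormedSpace ℝ X]

theorem Convex.mul_infDist_compl_le {U : Set X} (hU : Convex ℝ U) {a : X} (ha : a ∈ closure U)
    (w : X) {s : ℝ} (hs0 : 0 < s) (hs1 : s ≤ 1) :
    s * infDist w Uᶜ ≤ infDist ((1 - s) • a + s • w) Uᶜ := by
  rcases Uᶜ.eq_empty_or_nonempty with hUc | hUc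
  · simp [hUc]
  refine (le_infDist hUc).2 fun z hz => ?_
  by_contra! hlt
  set u := w + s⁻¹ • (z - ((1 - s) • a + s • w))
  have hu : u ∈ interior U := by
    refine interior_maximal (ball_infDist_compl_subset (x := w)) isOpen_ball ?_
    rw [mem_ball, dist_eq_norm, add_sub_cancel_left, norm_smul, Real.norm_eq_abs,
      abs_of_pos (inv_pos.2 hs0), ← dist_eq_norm, dist_comm, inv_mul_lt_iff₀ hs0]
    exact hlt
  have hz_eq : (1 - s) • a + s • u = z := by
    simp only [u, smul_add, smul_inv_smul₀ hs0.ne']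
    abel
  exact hz (hz_eq ▸ interior_subset (hU.combo_closure_interior_mem_interior ha hu
    (by linarith) hs0 (by ring)))

theorem exists_ray_subset_parabolicRegion {K U : Set X} (hUo : IsOpen U) (hUcv : Convex ℝ U)
    {a v : X} (ha : a ∈ K) (haU : a ∈ frontier U) {e : ℝ} (he : 0 ≤ e) (hev : a + e • v ∈ U) :
    ∃ ε > 0, ∀ t : ℝ, 0 ≤ t → t < ε → a + t • v ∈ parabolicRegion K U := by
  have ha_notMem : a ∉ U := (hUo.frontier_eq ▸ haU).2
  have he0 : e ≠ 0 := by rintro rfl; exact ha_notMem (by simpa using hev)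
  have hv : v ≠ 0 := by rintro rfl; exact ha_notMem (by simpa using hev)
  set r := infDist (a + e • v) Uᶜ
  have hr : 0 < r := (hUo.isClosed_compl.notMem_iff_infDist_pos ⟨a, ha_notMem⟩).1 (· hev)
  have hvn : 0 < ‖v‖ := norm_pos_iff.2 hv
  have he : 0 < e := he.lt_of_ne' he0
  refine ⟨min e (r / (e * ‖v‖ ^ 2)), by positivity, fun t ht0 htε => ?_⟩
  rcases ht0.eq_or_lt with rfl | ht
  · simpa using subset_parabolicRegion K U ha
  have hte : t < e := htε.trans_le (min_le_left _ _)
  have htr : t * ‖v‖ ^ 2 * e < r := by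
    have := (lt_div_iff₀ (by positivity)).1 (htε.trans_le (min_le_right _ _))
    linarith
  have hcombo : (1 - t / e) • a + (t / e) • (a + e • v) = a + t • v := by
    rw [smul_add, smul_smul, div_mul_cancel₀ _ he0]
    module
  have hK : infDist (a + t • v) K ≤ t * ‖v‖ := by
    simpa [norm_smul, abs_of_pos ht] using infDist_le_dist_of_mem (x := a + t • v) ha
  have hUdist := hcombo ▸ hUcv.mul_infDist_compl_le (frontier_subset_closure haU) (a + e • v)
    (div_pos ht he) ((div_le_one he).2 hte.le)
  calc infDist (a + t • v) K ^ 2 ≤ (t * ‖v‖) ^ 2 := pow_le_pow_left₀ infDist_nonneg hK 2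
    _ ≤ t / e * r := by rw [div_mul_eq_mul_div, le_div_iff₀ he]; nlinarith
    _ ≤ infDist (a + t • v) Uᶜ := hUdist

end ParabolicRegion

theorem isLNbhd_parabolicRegion_union_exteriorShadow {X : Type*} [NormedAddCommGroup X]
    [NormedSpace ℝ X] {K U : Set X} (hUo : IsOpen U) (hUcv : Convex ℝ U) (hK : K ⊆ frontier U) :
    IsLNbhd (parabolicRegion K U ∪ exteriorShadow K U) K := by
  intro a ha v
  by_cases hin : ∃ e ≥ (0 : ℝ), a + e • v ∈ U
  · obtain ⟨e, he, hev⟩ := hin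
    obtain ⟨ε, hε, hray⟩ := exists_ray_subset_parabolicRegion hUo hUcv ha (hK ha) he hev
    exact ⟨ε, hε, fun t ht0 htε => Or.inl (hray t ht0 htε)⟩
  · push Not at hin
    refine ⟨1, one_pos, fun t ht _ => Or.inr ⟨a, ha, fun s hs => ?_⟩⟩
    have hseg : (1 - s) • a + s • (a + t • v) = a + (s * t) • v := by module
    exact hseg ▸ hin _ (mul_nonneg hs.1.le ht)

/-- For a compact subset `K` of the boundary `S` of a strictly convex open set `U` in a
real normed space there is a closed ℓ-neighborhood `L` of `K` with `L ∩ S = K`. -/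
theorem stmt18 {X : Type*} [NormedAddCommGroup X] [NormedSpace ℝ X]
    (U : Set X) (hUo : IsOpen U) (hUsc : StrictlyConvexSet U)
    (K : Set X) (hK : K ⊆ frontier U) (hKc : IsCompact K) :
    ∃ L : Set X, IsClosed L ∧ IsLNbhd L K ∧ L ∩ frontier U = K := by
  rcases K.eq_empty_or_nonempty with rfl | hKne
  · exact ⟨∅, isClosed_empty, fun a ha => ha.elim, by simp⟩
  refine ⟨parabolicRegion K U ∪ exteriorShadow K U,
    (isClosed_parabolicRegion K U).union (isClosed_exteriorShadow hKc hUo),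
    isLNbhd_parabolicRegion_union_exteriorShadow hUo hUsc.convex hK, ?_⟩
  refine subset_antisymm ?_ fun a ha => ⟨Or.inl (subset_parabolicRegion K U ha), hK ha⟩
  rw [union_inter_distrib_right]
  exact union_subset (parabolicRegion_inter_frontier_subset hKc.isClosed hKne)
    (hUsc.exteriorShadow_inter_frontier_subset (hK.trans frontier_subset_closure))
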